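/- arXiv:2401.03964 — 5 statements merged into one kernel-verified Lean document; each statement's English description precedes it below -/
import Mathlib

section
/- Let d_ij > 0, f_ij ∈ ℝ, ū_ij, ū_ji ∈ ℝ, and real bounds u_i^min ≤ ū_ij ≤ u_i^max and u_j^min ≤ ū_ji ≤ u_j^max. Define the limited flux f*_ij by: if f_ij > 0 then f*_ij = min{f_ij, min{2d_ij(u_i^max − ū_ij), 2d_ij(ū_ji − u_j^min)}}; if f_ij = 0 then f*_ij = 0; if f_ij < 0 then f*_ij = max{f_ij, max{2d_ij(u_i^min − ū_ij), 2d_ij(ū_ji − u_j^max)}}. Then the flux-corrected state ū*_ij = ū_ij + f*_ij/(2d_ij) satisfies u_i^min ≤ ū*_ij ≤ u_i^max. -/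
theorem mcl_limited_state_bounds (d fij ubarij ubarji uimin uimax ujmin ujmax fstar : ℝ)
    (hd : 0 < d)
    (hi1 : uimin ≤ ubarij) (hi2 : ubarij ≤ uimax)
    (hj1 : ujmin ≤ ubarji) (hj2 : ubarji ≤ ujmax)
    (hfstar : fstar =
      if fij > 0 then min fij (min (2 * d * (uimax - ubarij)) (2 * d * (ubarji - ujmin)))
      else if fij = 0 then 0
      else max fij (max (2 * d * (uimin - ubarij)) (2 * d * (ubarji - ujmax)))) :
    uimin ≤ ubarij + fstar / (2 * d) ∧ ubarij + fstar / (2 * d) ≤ uimax := by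
  have h2d : 0 < 2 * d := by linarith
  have key : 2 * d * (uimin - ubarij) ≤ fstar ∧ fstar ≤ 2 * d * (uimax - ubarij) := by
    subst hfstar
    split_ifs with h1 h2
    · constructor
      · have : (0:ℝ) ≤ min fij (min (2 * d * (uimax - ubarij)) (2 * d * (ubarji - ujmin))) := by
          refine le_min (le_of_lt h1) (le_min ?_ ?_) <;> nlinarith
        nlinarith
      · exact (min_le_right _ _).trans (min_le_left _ _)
    · constructor <;> nlinarith
    · have hneg : fij < 0 := lt_of_le_of_ne (not_lt.mp h1) h2
      constructor
      · exact (le_max_left _ _).trans (le_max_right _ _)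
      · have : max fij (max (2 * d * (uimin - ubarij)) (2 * d * (ubarji - ujmax))) ≤ 0 := by
          refine max_le (le_of_lt hneg) (max_le ?_ ?_) <;> nlinarith
        nlinarith
  obtain ⟨k1, k2⟩ := key
  have h1' : uimin - ubarij ≤ fstar / (2 * d) := (le_div_iff₀ h2d).mpr (by nlinarith)
  have h2' : fstar / (2 * d) ≤ uimax - ubarij := (div_le_iff₀ h2d).mpr (by nlinarith)
  constructor <;> linarith
end

section
/- Let v̂ ∈ ℝ^d \ {0}, f̂ ∈ ℝ, and nodes x_i, x_j ∈ ℝ^d. Set u_i = f̂ (x_i·v̂)/|v̂|², u_j = f̂ (x_j·v̂)/|v̂|², and s_i = s_j = f̂. Then the balancing flux P_ij = (1/2)·((s_i+s_j)/2)·((x_i − x_j)·(v(x_i)+v(x_j))) / (2·max{|v(x_i)|,|v(x_j)|}²), with constant velocity v(x) = v̂, equals (u_i − u_j)/2. -/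
theorem balancing_flux_at_equilibrium_general (d : ℕ) (v : EuclideanSpace ℝ (Fin d))
    (fhat : ℝ) (xi xj : EuclideanSpace ℝ (Fin d))
    (ui uj si sj Pij : ℝ)
    (hui : ui = fhat * (inner ℝ xi v : ℝ) / ‖v‖ ^ 2)
    (huj : uj = fhat * (inner ℝ xj v : ℝ) / ‖v‖ ^ 2)
    (hsi : si = fhat) (hsj : sj = fhat)
    (hP : Pij = (1 / 2) * ((si + sj) / 2) * (inner ℝ (xi - xj) (v + v) : ℝ) /
      (2 * (max ‖v‖ ‖v‖) ^ 2)) :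
    Pij = (ui - uj) / 2 := by
  subst hui huj hsi hsj hP
  rw [max_self, inner_add_right, inner_sub_left]
  ring

theorem balancing_flux_at_equilibrium (d : ℕ) (v : EuclideanSpace ℝ (Fin d)) (hv : v ≠ 0)
    (fhat : ℝ) (xi xj : EuclideanSpace ℝ (Fin d))
    (ui uj si sj Pij : ℝ)
    (hui : ui = fhat * (inner ℝ xi v : ℝ) / ‖v‖ ^ 2)
    (huj : uj = fhat * (inner ℝ xj v : ℝ) / ‖v‖ ^ 2)
    (hsi : si = fhat) (hsj : sj = fhat)
    (hP : Pij = (1 / 2) * ((si + sj) / 2) * (inner ℝ (xi - xj) (v + v) : ℝ) /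
      (2 * (max ‖v‖ ‖v‖) ^ 2)) :
    Pij = (ui - uj) / 2 :=
  balancing_flux_at_equilibrium_general d v fhat xi xj ui uj si sj Pij hui huj hsi hsj hP
end

section
/- Under the definitions of the well-balanced MCL scheme, for any indices i, j: if f^s_ij > 0 then the limited flux satisfies f^{s,*}_ij ≤ 2d_ij(ū_i^max − ū^s_ij), and in all cases 2d_ij(u_i − ū_i^max) ≤ (a^C_ij + a^R_ij)(u_j − u_i) − 2d_ij b_i/a^C_i + f^s_ij − f^{s,*}_ij ≤ 2d_ij(u_i − ū_i^min). -/
theorem wb_mcl_estimates (d aC aR bi aCi ui uj ubars ubarsji uimin uimax ujmin ujmax fs fstar : ℝ)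
    (hd : 0 < d) (haCi : 0 < aCi)
    (hid : fs = 2 * d * (ui - ubars) + (aC + aR) * (ui - uj) + 2 * d * bi / aCi)
    (hi1 : uimin ≤ ubars) (hi2 : ubars ≤ uimax)
    (hj1 : ujmin ≤ ubarsji) (hj2 : ubarsji ≤ ujmax)
    (hfstar : fstar =
      if fs > 0 then min fs (min (2 * d * (uimax - ubars)) (2 * d * (ubarsji - ujmin)))
      else if fs = 0 then 0
      else max fs (max (2 * d * (uimin - ubars)) (2 * d * (ubarsji - ujmax)))) :
    (fs > 0 → fstar ≤ 2 * d * (uimax - ubars)) ∧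
    (2 * d * (ui - uimax) ≤ (aC + aR) * (uj - ui) - 2 * d * bi / aCi + fs - fstar ∧
      (aC + aR) * (uj - ui) - 2 * d * bi / aCi + fs - fstar ≤ 2 * d * (ui - uimin)) := by
  have h1 : (0:ℝ) ≤ 2 * d * (uimax - ubars) := by nlinarith
  have h2 : (0:ℝ) ≤ 2 * d * (ubarsji - ujmin) := by nlinarith
  have h3 : 2 * d * (uimin - ubars) ≤ 0 := by nlinarith
  have h4 : 2 * d * (ubarsji - ujmax) ≤ 0 := by nlinarith
  have hhigh : fstar ≤ 2 * d * (uimax - ubars) ∧ 2 * d * (uimin - ubars) ≤ fstar := by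
    rw [hfstar]
    split_ifs with hpos hz
    · constructor
      · exact le_trans (min_le_right _ _) (min_le_left _ _)
      · exact le_trans h3 (le_min (le_of_lt hpos) (le_min h1 h2))
    · exact ⟨h1, h3⟩
    · have hneg : fs < 0 := lt_of_le_of_ne (not_lt.mp hpos) hz
      constructor
      · exact le_trans (max_le (le_of_lt hneg) (max_le h3 h4)) h1
      · exact le_trans (le_max_left _ _) (le_max_right _ _)
  refine ⟨fun hpos => hhigh.1, ?_, ?_⟩ <;> nlinarith [hhigh.1, hhigh.2]
end

section
/- Let n ≥ 1, and for i ∈ {1,…,n} let N_i ⊆ {1,…,n}\{i} be nonempty neighbor sets. Suppose real numbers u_1,…,u_n, coefficients a^D_ij ≤ 0 for j ∈ N_i with Σ_{j∈N_i} a^D_ij < 0 (i.e., at least one a^D_ij < 0), coefficients d_ij > 0, b_i ≤ 0, a^C_i > 0, a^R_i ≥ 0 with a^R_i u_i ≥ 0, and bar states ū^s_ij satisfying: (u_i ≥ u_j for all j ∈ N_i) implies ū^s_ij ≤ u_i for all j ∈ N_i. If b_i ≥ Σ_{j∈N_i} [a^D_ij(u_j − u_i) + 2d_ij(u_i − ū_i^max)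 + 2d_ij b_i/a^C_i] where ū_i^max = max_{j∈N_i} ū^s_ij, and Σ_{j∈N_i} 2d_ij = a^C_i, then there exists j ∈ N_i with u_i ≤ u_j. -/
theorem local_dmp_abstract {ι : Type*} [DecidableEq ι] (N : Finset ι) (hN : N.Nonempty)
    (u aD d ubars : ι → ℝ) (ui bi aCi aRi : ℝ)
    (haD : ∀ j ∈ N, aD j ≤ 0) (haDneg : ∃ j ∈ N, aD j < 0)
    (hd : ∀ j ∈ N, 0 < d j)
    (hb : bi ≤ 0) (haCi : 0 < aCi) (haRi : 0 ≤ aRi) (haRui : 0 ≤ aRi * ui)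
    (hbar : (∀ j ∈ N, u j ≤ ui) → ∀ j ∈ N, ubars j ≤ ui)
    (hsum : ∑ j ∈ N, 2 * d j = aCi)
    (hineq : bi ≥ ∑ j ∈ N,
      (aD j * (u j - ui) + 2 * d j * (ui - N.sup' hN ubars) + 2 * d j * bi / aCi)) :
    ∃ j ∈ N, ui ≤ u j := by
  by_contra h
  push_neg at h
  have hle : ∀ j ∈ N, u j ≤ ui := fun j hj => (h j hj).le
  have hbar' := hbar hle
  have hsup : N.sup' hN ubars ≤ ui := Finset.sup'_le hN ubars hbar'
  have hsplit : ∑ j ∈ N,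
      (aD j * (u j - ui) + 2 * d j * (ui - N.sup' hN ubars) + 2 * d j * bi / aCi)
      = (∑ j ∈ N, (aD j * (u j - ui) + 2 * d j * (ui - N.sup' hN ubars))) + bi := by
    rw [Finset.sum_add_distrib]
    congr 1
    have : ∀ j ∈ N, 2 * d j * bi / aCi = 2 * d j * (bi / aCi) := fun j _ => by ring
    rw [Finset.sum_congr rfl this, ← Finset.sum_mul, hsum]
    field_simp
  rw [hsplit] at hineq
  have hkey : (∑ j ∈ N, (aD j * (u j - ui) + 2 * d j * (ui - N.sup' hN ubars))) ≤ 0 := by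
    linarith
  have hpos : 0 < ∑ j ∈ N, (aD j * (u j - ui) + 2 * d j * (ui - N.sup' hN ubars)) := by
    obtain ⟨j0, hj0, hj0neg⟩ := haDneg
    apply Finset.sum_pos' ?_ ⟨j0, hj0, ?_⟩
    · intro j hj
      have h1 : 0 ≤ aD j * (u j - ui) := by
        nlinarith [haD j hj, h j hj]
      have h2 : 0 ≤ 2 * d j * (ui - N.sup' hN ubars) :=
        mul_nonneg (by linarith [hd j hj]) (by linarith)
      linarith
    · have h1 : 0 < aD j0 * (u j0 - ui) :=
        mul_pos_of_neg_of_neg hj0neg (by linarith [h j0 hj0])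
      have h2 : 0 ≤ 2 * d j0 * (ui - N.sup' hN ubars) :=
        mul_nonneg (by linarith [hd j0 hj0]) (by linarith)
      linarith
  linarith
end

section
/- Let a^R_i ≥ 0, d_ij > 0 for j ∈ N_i, a^D_ij ≤ 0 for j ∈ N_i, and a^C_i = Σ_{j∈N_i} 2d_ij, a_i = a^R_i + a^C_i − Σ_{j∈N_i} a^D_ij. Then a_i > 0, the weights w_j = 2d_ij/a_i and w'_j = −a^D_ij/a_i and w_0 = a^R_i/a_i are all nonnegative with Σ_{j∈N_i}(w_j + w'_j) + w_0 = 1, and consequently the fixed-point update u_i^{new} = (1/a_i) Σ_{j∈N_i}[2d_ij ū^{s,*}_ij − a^D_ij u_j] is a subconvex combination: if all ū^{s,*}_ij and all u_j lie in [m, M] with 0 ≤ m ≤ M (or if a^R_i = 0 and all lie in [m,M] ⊆ ℝ), then u_i^{new} ∈ [m·(1−w_0), M] (respectively u_i^{new} ∈ [m, M]). -/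
/-!
With `W = ∑ⱼ (2 dᵢⱼ - a^Dᵢⱼ) > 0` the diagonal entry is `aᵢ = a^Rᵢ + W`, so the update is
`S / aᵢ` where `S` is a combination of the states with nonnegative weights of total mass `W`.
Hence `S ∈ [m W, M W]`, and dividing by `aᵢ ≥ W` gives the bounds, with `W / aᵢ = 1 - a^Rᵢ / aᵢ`.
-/

open Finset

theorem Finset.sum_mul_add_mul_mem_Icc {ι : Type*} (s : Finset ι) {p q x y : ι → ℝ} {m M : ℝ}
    (hp : ∀ i ∈ s, 0 ≤ p i) (hq : ∀ i ∈ s, 0 ≤ q i)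
    (hxy : ∀ i ∈ s, x i ∈ Set.Icc m M ∧ y i ∈ Set.Icc m M) :
    ∑ i ∈ s, (p i * x i + q i * y i) ∈
      Set.Icc (m * ∑ i ∈ s, (p i + q i)) (M * ∑ i ∈ s, (p i + q i)) := by
  rw [mul_sum, mul_sum]
  refine ⟨sum_le_sum fun i hi => ?_, sum_le_sum fun i hi => ?_⟩ <;>
    obtain ⟨⟨hxm, hxM⟩, hym, hyM⟩ := hxy i hi
  · linarith [mul_le_mul_of_nonneg_left hxm (hp i hi), mul_le_mul_of_nonneg_left hym (hq i hi)]
  · linarith [mul_le_mul_of_nonneg_left hxM (hp i hi), mul_le_mul_of_nonneg_left hyM (hq i hi)]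

theorem fixed_point_update_bounds_general {ι : Type*} (N : Finset ι) (hN : N.Nonempty)
    (d aD ubars u : ι → ℝ) (aRi m M : ℝ)
    (haRi : 0 ≤ aRi)
    (hd : ∀ j ∈ N, 0 < d j) (haD : ∀ j ∈ N, aD j ≤ 0) :
    let aCi := ∑ j ∈ N, 2 * d j
    let ai := aRi + aCi - ∑ j ∈ N, aD j
    let unew := (1 / ai) * ∑ j ∈ N, (2 * d j * ubars j - aD j * u j)
    0 < ai ∧
    (∀ j ∈ N, 0 ≤ 2 * d j / ai ∧ 0 ≤ -aD j / ai) ∧ 0 ≤ aRi / ai ∧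
    (∑ j ∈ N, (2 * d j / ai + -aD j / ai)) + aRi / ai = 1 ∧
    ((0 ≤ m → m ≤ M →
        (∀ j ∈ N, ubars j ∈ Set.Icc m M ∧ u j ∈ Set.Icc m M) →
        unew ∈ Set.Icc (m * (1 - aRi / ai)) M) ∧
     (aRi = 0 → m ≤ M →
        (∀ j ∈ N, ubars j ∈ Set.Icc m M ∧ u j ∈ Set.Icc m M) →
        unew ∈ Set.Icc m M)) := by
  intro aCi ai unew
  set W := ∑ j ∈ N, (2 * d j + -aD j)
  have hai_eq : ai = aRi + W := by
    simp only [ai, aCi, W, sum_add_distrib, sum_neg_distrib]; ring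
  have hW : 0 < W := sum_pos (fun j hj => by linarith [hd j hj, haD j hj]) hN
  have hai : 0 < ai := by linarith
  have hunew : ∀ m M, (∀ j ∈ N, ubars j ∈ Set.Icc m M ∧ u j ∈ Set.Icc m M) →
      unew ∈ Set.Icc (m * W / ai) (M * W / ai) := fun m M hb => by
    have hS := N.sum_mul_add_mul_mem_Icc (p := (2 * d ·)) (q := (-aD ·))
      (fun j hj => by linarith [hd j hj]) (fun j hj => neg_nonneg.2 (haD j hj)) hb
    simp only [unew, one_div_mul_eq_div, sub_eq_add_neg, neg_mul_eq_neg_mul]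
    exact ⟨div_le_div_of_nonneg_right hS.1 hai.le, div_le_div_of_nonneg_right hS.2 hai.le⟩
  have hW_div : W / ai = 1 - aRi / ai := by field_simp; linarith
  refine ⟨hai, fun j hj => ⟨?_, ?_⟩, by positivity, ?_, fun hm hmM hb => ?_, fun h0 _ hb => ?_⟩
  · exact div_nonneg (by linarith [hd j hj]) hai.le
  · exact div_nonneg (neg_nonneg.2 (haD j hj)) hai.le
  · simp only [← add_div, ← sum_div]
    change (W + aRi) / ai = 1
    rw [div_eq_one_iff_eq hai.ne']; linarith
  · obtain ⟨hlo, hhi⟩ := hunew m M hb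
    refine ⟨by rwa [← hW_div, ← mul_div_assoc], hhi.trans ?_⟩
    rw [mul_div_assoc]
    exact mul_le_of_le_one_right (hm.trans hmM) ((div_le_one hai).2 (by linarith))
  · have hW_eq : W = ai := by linarith
    simpa only [hW_eq, mul_div_assoc, div_self hai.ne', mul_one] using hunew m M hb

theorem fixed_point_update_bounds {ι : Type*} [DecidableEq ι] (N : Finset ι) (hN : N.Nonempty)
    (d aD ubars u : ι → ℝ) (aRi m M : ℝ)
    (haRi : 0 ≤ aRi)
    (hd : ∀ j ∈ N, 0 < d j) (haD : ∀ j ∈ N, aD j ≤ 0) :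
    let aCi := ∑ j ∈ N, 2 * d j
    let ai := aRi + aCi - ∑ j ∈ N, aD j
    let unew := (1 / ai) * ∑ j ∈ N, (2 * d j * ubars j - aD j * u j)
    0 < ai ∧
    (∀ j ∈ N, 0 ≤ 2 * d j / ai ∧ 0 ≤ -aD j / ai) ∧ 0 ≤ aRi / ai ∧
    (∑ j ∈ N, (2 * d j / ai + -aD j / ai)) + aRi / ai = 1 ∧
    ((0 ≤ m → m ≤ M →
        (∀ j ∈ N, ubars j ∈ Set.Icc m M ∧ u j ∈ Set.Icc m M) →
        unew ∈ Set.Icc (m * (1 - aRi / ai)) M) ∧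
     (aRi = 0 → m ≤ M →
        (∀ j ∈ N, ubars j ∈ Set.Icc m M ∧ u j ∈ Set.Icc m M) →
        unew ∈ Set.Icc m M)) :=
  fixed_point_update_bounds_general N hN d aD ubars u aRi m M haRi hd haD
end
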